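/- Let A ∈ ℝ^{n×n}, B ∈ ℝ^{n×m}, H ≥ 1, and suppose P_H(A,B) = [A^{H−1}B, …, B] has full row rank n. Let C ∈ ℝ^{n×n} and D ∈ ℝ^{m×m} be symmetric positive definite, 𝐂 = I_H ⊗ C, 𝐃 = I_H ⊗ D, let e_j ∈ ℝ^n be a standard basis vector, and set u_c = P_H(A,B)⁺ · A^H · e_j and g = [𝐂·G_u(A,B); 𝐃]·u_c (stacking 𝐂·G_u(A,B) on top of 𝐃). Then ‖g‖₂ ≤ (‖C‖₂·√H·λ_max(W^u_H(A,B))^{1/2} + ‖D‖₂)·λ_min(W^u_H(A,B))^{−1/2}·α_H, where α_H := max_{0 ≤ k ≤ H} ‖A^k‖₂. -/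

import Mathlib

open Matrix
open scoped Matrix.Norms.L2Operator Kronecker

/-- `Xp` is the Moore–Penrose pseudoinverse of `X`: the four Penrose conditions. -/
def IsMoorePenrose {α β : Type*} [Fintype α] [Fintype β] [DecidableEq α] [DecidableEq β]
    (X : Matrix α β ℝ) (Xp : Matrix β α ℝ) : Prop :=
  X * Xp * X = X ∧ Xp * X * Xp = Xp ∧ (X * Xp)ᵀ = X * Xp ∧ (Xp * X)ᵀ = Xp * X

/-- The Euclidean norm of a finitely-indexed real vector. -/
noncomputable def evnorm {ι : Type*} [Fintype ι] (v : ι → ℝ) : ℝ :=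
  Real.sqrt (∑ i, v i ^ 2)

/-- The block lower-triangular Toeplitz matrix `G_u(A,B) ∈ ℝ^{Hn×Hm}` whose `(i,j)` block
(for `j ≤ i`) is `A^{i−j}B` and whose blocks above the block diagonal are zero. -/
def Gu {n m : ℕ} (H : ℕ) (A : Matrix (Fin n) (Fin n) ℝ) (B : Matrix (Fin n) (Fin m) ℝ) :
    Matrix (Fin H × Fin n) (Fin H × Fin m) ℝ :=
  Matrix.of fun p q =>
    if (q.1 : ℕ) ≤ (p.1 : ℕ) then (A ^ ((p.1 : ℕ) - (q.1 : ℕ)) * B) p.2 q.2 else 0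

/-- The `H`-step controllability matrix `P_H(A,B) = [A^{H−1}B, …, B] ∈ ℝ^{n×Hm}`. -/
def PH {n m : ℕ} (H : ℕ) (A : Matrix (Fin n) (Fin n) ℝ) (B : Matrix (Fin n) (Fin m) ℝ) :
    Matrix (Fin n) (Fin H × Fin m) ℝ :=
  Matrix.of fun i q => (A ^ (H - 1 - (q.1 : ℕ)) * B) i q.2

/-- The `H`-th controllability Grammian `W^u_H(A,B) = ∑_{i=0}^{H−1} A^i B Bᵀ (Aᵀ)^i`. -/
def Wu {n m : ℕ} (H : ℕ) (A : Matrix (Fin n) (Fin n) ℝ) (B : Matrix (Fin n) (Fin m) ℝ) :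
    Matrix (Fin n) (Fin n) ℝ :=
  ∑ i ∈ Finset.range H, A ^ i * B * Bᵀ * (Aᵀ) ^ i

/-!
Write `P = P_H(A,B)`, so that `W^u_H = P Pᵀ`. Full row rank gives `P P⁺ = 1`, hence `W^u_H` is
positive definite and, by the Penrose identities, `u_c = Pᵀ y` with `W^u_H y = A^H e_j`.
Expanding `y` in an orthonormal eigenbasis of `W^u_H` gives `λ_min · yᵀ W^u_H y ≤ ‖W^u_H y‖²`,
i.e. `‖u_c‖² ≤ ‖A^H e_j‖² / λ_min ≤ α_H² / λ_min`; the same expansion gives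
`‖Pᵀ y‖² = yᵀ W^u_H y ≤ λ_max ‖y‖²`, so `‖P‖ = ‖Pᵀ‖ ≤ λ_max^{1/2}`.
Block row `i` of `G_u(A,B)` is `P` applied to the input shifted down by `H - 1 - i` blocks, a
shift that cannot increase the norm, so `‖G_u u‖ ≤ √H ‖P‖ ‖u‖`. Finally `I_H ⊗ C` and `I_H ⊗ D`
act blockwise with norms at most `‖C‖` and `‖D‖`, and the stacked vector has norm at most the
sum of the norms of its two parts.
-/

section Euclidean

variable {ι κ : Type*} [Fintype ι] [Fintype κ]

lemma evnorm_nonneg (v : ι → ℝ) : 0 ≤ evnorm v := Real.sqrt_nonneg _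

lemma evnorm_sq (v : ι → ℝ) : evnorm v ^ 2 = ∑ i, v i ^ 2 :=
  Real.sq_sqrt (Finset.sum_nonneg fun _ _ => sq_nonneg _)

lemma evnorm_eq_norm_toLp (v : ι → ℝ) : evnorm v = ‖WithLp.toLp 2 v‖ := by
  simp [evnorm, EuclideanSpace.norm_eq, sq_abs]

lemma evnorm_mulVec_le [DecidableEq ι] [DecidableEq κ] (M : Matrix ι κ ℝ) (v : κ → ℝ) :
    evnorm (M *ᵥ v) ≤ ‖M‖ * evnorm v := by
  rw [evnorm_eq_norm_toLp, evnorm_eq_norm_toLp]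
  exact M.l2_opNorm_mulVec (WithLp.toLp 2 v)

lemma evnorm_transpose_mulVec_sq (X : Matrix ι κ ℝ) (y : ι → ℝ) :
    evnorm (Xᵀ *ᵥ y) ^ 2 = y ⬝ᵥ ((X * Xᵀ) *ᵥ y) := by
  rw [evnorm_sq, ← mulVec_mulVec, dotProduct_mulVec, ← mulVec_transpose]
  simp [dotProduct, sq]

lemma evnorm_sum_elim_le (a : ι → ℝ) (b : κ → ℝ) :
    evnorm (Sum.elim a b) ≤ evnorm a + evnorm b := by
  rw [evnorm, Fintype.sum_sum_type]
  simp only [Sum.elim_inl, Sum.elim_inr, ← evnorm_sq]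
  have ha := evnorm_nonneg a
  have hb := evnorm_nonneg b
  exact Real.sqrt_le_iff.2 ⟨by positivity, by nlinarith⟩

lemma evnorm_sq_eq_sum_blocks (v : ι × κ → ℝ) :
    evnorm v ^ 2 = ∑ i, evnorm (fun k => v (i, k)) ^ 2 := by
  simp only [evnorm_sq, Fintype.sum_prod_type]

end Euclidean

lemma kronecker_one_mulVec_apply {ι κ μ : Type*} [Fintype κ] [Fintype μ] [DecidableEq μ]
    (C : Matrix ι κ ℝ) (w : μ × κ → ℝ) (i : μ) (k : ι) :
    (((1 : Matrix μ μ ℝ) ⊗ₖ C) *ᵥ w) (i, k) = (C *ᵥ fun l => w (i, l)) k := by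
  simp only [mulVec, dotProduct, Fintype.sum_prod_type, kroneckerMap_apply, one_apply]
  rw [Finset.sum_eq_single i (fun q _ hqi => by simp [Ne.symm hqi]) (by simp)]
  simp

lemma evnorm_kronecker_one_mulVec_le {ι κ μ : Type*} [Fintype ι] [Fintype κ] [Fintype μ]
    [DecidableEq ι] [DecidableEq κ] [DecidableEq μ] (C : Matrix ι κ ℝ) (w : μ × κ → ℝ) :
    evnorm (((1 : Matrix μ μ ℝ) ⊗ₖ C) *ᵥ w) ≤ ‖C‖ * evnorm w := by
  have hw := evnorm_nonneg w
  rw [← sq_le_sq₀ (evnorm_nonneg _) (by positivity), evnorm_sq_eq_sum_blocks, mul_pow,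
    evnorm_sq_eq_sum_blocks, Finset.mul_sum]
  refine Finset.sum_le_sum fun i _ => ?_
  rw [← mul_pow]
  refine pow_le_pow_left₀ (evnorm_nonneg _) ?_ 2
  simpa only [kronecker_one_mulVec_apply] using evnorm_mulVec_le C _

lemma evnorm_fromRows_mulVec_le {ι₁ ι₂ κ : Type*} [Fintype ι₁] [Fintype ι₂] [Fintype κ]
    (M : Matrix ι₁ κ ℝ) (N : Matrix ι₂ κ ℝ) (v : κ → ℝ) :
    evnorm (fromRows M N *ᵥ v) ≤ evnorm (M *ᵥ v) + evnorm (N *ᵥ v) := by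
  rw [fromRows_mulVec]
  exact evnorm_sum_elim_le _ _

namespace Matrix.IsHermitian

variable {ι : Type*} [Fintype ι] [DecidableEq ι] {W : Matrix ι ι ℝ} (hW : W.IsHermitian)

lemma eigenvectorBasis_repr_mulVec (v : ι → ℝ) (i : ι) :
    hW.eigenvectorBasis.repr (WithLp.toLp 2 (W *ᵥ v)) i =
      hW.eigenvalues i * hW.eigenvectorBasis.repr (WithLp.toLp 2 v) i := by
  have hWt : Wᵀ = W := by simpa using hW.eq
  simp only [OrthonormalBasis.repr_apply_apply, EuclideanSpace.inner_eq_star_dotProduct,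
    star_trivial]
  rw [dotProduct_comm, dotProduct_mulVec, ← mulVec_transpose, hWt, hW.mulVec_eigenvectorBasis]
  simp [dotProduct_comm]

lemma evnorm_sq_eq_sum_repr (v : ι → ℝ) :
    evnorm v ^ 2 = ∑ i, hW.eigenvectorBasis.repr (WithLp.toLp 2 v) i ^ 2 := by
  rw [evnorm_eq_norm_toLp, ← hW.eigenvectorBasis.repr.norm_map, EuclideanSpace.real_norm_sq_eq]

lemma evnorm_mulVec_sq_eq_sum_repr (v : ι → ℝ) :
    evnorm (W *ᵥ v) ^ 2 =
      ∑ i, (hW.eigenvalues i * hW.eigenvectorBasis.repr (WithLp.toLp 2 v) i) ^ 2 := by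
  simp only [hW.evnorm_sq_eq_sum_repr, eigenvectorBasis_repr_mulVec]

lemma dotProduct_mulVec_eq_sum_repr (v : ι → ℝ) :
    v ⬝ᵥ (W *ᵥ v) =
      ∑ i, hW.eigenvalues i * hW.eigenvectorBasis.repr (WithLp.toLp 2 v) i ^ 2 := by
  calc v ⬝ᵥ (W *ᵥ v) = inner ℝ (WithLp.toLp 2 v) (WithLp.toLp 2 (W *ᵥ v)) := by
        rw [EuclideanSpace.inner_toLp_toLp, star_trivial, dotProduct_comm]
    _ = inner ℝ (hW.eigenvectorBasis.repr (WithLp.toLp 2 v))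
          (hW.eigenvectorBasis.repr (WithLp.toLp 2 (W *ᵥ v))) :=
        (hW.eigenvectorBasis.repr.inner_map_map _ _).symm
    _ = _ := by
        simp only [PiLp.inner_apply, eigenvectorBasis_repr_mulVec, Real.inner_apply]
        exact Finset.sum_congr rfl fun i _ => by ring

lemma dotProduct_mulVec_le (v : ι → ℝ) :
    v ⬝ᵥ (W *ᵥ v) ≤ (⨆ i, hW.eigenvalues i) * evnorm v ^ 2 := by
  rw [hW.dotProduct_mulVec_eq_sum_repr, hW.evnorm_sq_eq_sum_repr, Finset.mul_sum]
  gcongr with i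
  exact le_ciSup (Finite.bddAbove_range _) i

lemma iInf_mul_dotProduct_mulVec_le (h0 : 0 ≤ ⨅ i, hW.eigenvalues i) (v : ι → ℝ) :
    (⨅ i, hW.eigenvalues i) * (v ⬝ᵥ (W *ᵥ v)) ≤ evnorm (W *ᵥ v) ^ 2 := by
  rw [hW.dotProduct_mulVec_eq_sum_repr, hW.evnorm_mulVec_sq_eq_sum_repr, Finset.mul_sum]
  gcongr with i
  have hle : (⨅ i, hW.eigenvalues i) ≤ hW.eigenvalues i := ciInf_le (Finite.bddBelow_range _) i
  rw [mul_pow, ← mul_assoc, sq (hW.eigenvalues i)]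
  gcongr
  exact h0.trans hle

end Matrix.IsHermitian

section Gram

variable {ι κ : Type*} [Fintype ι] [Fintype κ] [DecidableEq ι] {W : Matrix ι ι ℝ}
  {X : Matrix ι κ ℝ}

lemma evnorm_transpose_mulVec_le (hW : W.IsHermitian) (hXW : X * Xᵀ = W) (y : ι → ℝ) :
    evnorm (Xᵀ *ᵥ y) ≤ √(⨆ i, hW.eigenvalues i) * evnorm y := by
  rw [← Real.sqrt_sq (evnorm_nonneg (Xᵀ *ᵥ y)), ← Real.sqrt_sq (evnorm_nonneg y),
    ← Real.sqrt_mul' _ (sq_nonneg _), evnorm_transpose_mulVec_sq, hXW]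
  exact Real.sqrt_le_sqrt (hW.dotProduct_mulVec_le y)

lemma l2_opNorm_le_sqrt_iSup_eigenvalues [DecidableEq κ] (hW : W.IsHermitian)
    (hXW : X * Xᵀ = W) : ‖X‖ ≤ √(⨆ i, hW.eigenvalues i) := by
  rw [← l2_opNorm_conjTranspose, conjTranspose_eq_transpose_of_trivial, l2_opNorm_def]
  refine ContinuousLinearMap.opNorm_le_bound _ (Real.sqrt_nonneg _) fun y => ?_
  simpa [evnorm_eq_norm_toLp, toLpLin_apply] using evnorm_transpose_mulVec_le hW hXW y.ofLp

end Gram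

section PositiveDefinite

variable {α β : Type*} [Fintype α] [Fintype β] [DecidableEq α] {X : Matrix α β ℝ}
  {Y : Matrix β α ℝ}

lemma posDef_mul_transpose_of_mul_eq_one (h1 : X * Y = 1) : (X * Xᵀ).PosDef := by
  rw [← conjTranspose_eq_transpose_of_trivial]
  refine PosDef.mul_conjTranspose_self X fun v w hvw => ?_
  simpa [vecMul_vecMul, h1] using congrArg (· ᵥ* Y) hvw

lemma iInf_eigenvalues_pos_of_mul_eq_one [Nonempty α] {W : Matrix α α ℝ} (hW : W.IsHermitian)
    (hXW : X * Xᵀ = W) (h1 : X * Y = 1) : 0 < ⨅ i, hW.eigenvalues i := by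
  have hPD : W.PosDef := hXW ▸ posDef_mul_transpose_of_mul_eq_one h1
  obtain ⟨i, hi⟩ := exists_eq_ciInf_of_finite (f := hW.eigenvalues)
  exact hi ▸ hPD.eigenvalues_pos i

end PositiveDefinite

namespace IsMoorePenrose

variable {α β : Type*} [Fintype α] [Fintype β] [DecidableEq α] [DecidableEq β]
  {X : Matrix α β ℝ} {Xp : Matrix β α ℝ}

lemma mul_eq_one_of_rank_eq (h : IsMoorePenrose X Xp) (hX : X.rank = Fintype.card α) :
    X * Xp = 1 := by
  have hrange : LinearMap.range X.mulVecLin = ⊤ :=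
    Submodule.eq_top_of_finrank_eq (by rw [Module.finrank_fintype_fun_eq_card]; exact hX)
  obtain ⟨Y, hY⟩ :=
    mulVec_surjective_iff_exists_right_inverse.mp (LinearMap.range_eq_top.mp hrange)
  calc X * Xp = X * Xp * (X * Y) := by rw [hY, Matrix.mul_one]
    _ = 1 := by rw [← Matrix.mul_assoc, h.1, hY]

lemma transpose_mul_eq (h : IsMoorePenrose X Xp) : Xᵀ * (Xpᵀ * Xp) = Xp := by
  conv_rhs => rw [← h.2.1, ← h.2.2.2, transpose_mul]
  rw [Matrix.mul_assoc]

lemma evnorm_mulVec_le [Nonempty α] (h : IsMoorePenrose X Xp) (h1 : X * Xp = 1)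
    {W : Matrix α α ℝ} (hW : W.IsHermitian) (hXW : X * Xᵀ = W) (w : α → ℝ) :
    evnorm (Xp *ᵥ w) ≤ (√(⨅ i, hW.eigenvalues i))⁻¹ * evnorm w := by
  have hpos := iInf_eigenvalues_pos_of_mul_eq_one hW hXW h1
  set y := (Xpᵀ * Xp) *ᵥ w
  have hu : Xp *ᵥ w = Xᵀ *ᵥ y := by rw [mulVec_mulVec, h.transpose_mul_eq]
  have hy : W *ᵥ y = w := by
    rw [mulVec_mulVec, ← hXW, Matrix.mul_assoc, h.transpose_mul_eq, h1, one_mulVec]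
  rw [le_inv_mul_iff₀ (Real.sqrt_pos.mpr hpos),
    ← sq_le_sq₀ (mul_nonneg (Real.sqrt_nonneg _) (evnorm_nonneg _)) (evnorm_nonneg _),
    mul_pow, Real.sq_sqrt hpos.le, hu, evnorm_transpose_mulVec_sq, hXW, ← hy]
  exact hW.iInf_mul_dotProduct_mulVec_le hpos.le y

end IsMoorePenrose

section Control

variable {n m H : ℕ}

def blockShift (c : ℕ) (u : Fin H × Fin m → ℝ) : Fin H × Fin m → ℝ :=
  fun p => if h : c ≤ p.1 then u (⟨p.1 - c, by omega⟩, p.2) else 0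

lemma sum_blockShift (c : ℕ) (u : Fin H × Fin m → ℝ) (F : Fin H × Fin m → ℝ → ℝ)
    (hF : ∀ p, F p 0 = 0) :
    ∑ p, F p (blockShift c u p) =
      ∑ q, if h : q.1.val + c < H then F (⟨q.1 + c, h⟩, q.2) (u q) else 0 := by
  have hsupp : ∀ p, F p (blockShift c u p) ≠ 0 → c ≤ p.1 := fun p hp => by
    by_contra h
    simp [blockShift, h, hF] at hp
  refine Finset.sum_bij_ne_zero (fun p _ _ => (⟨p.1 - c, by omega⟩, p.2)) (by simp) ?_ ?_ ?_
  · intro p _ hp p' _ hp' hpp'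
    have hcp := hsupp p hp
    have hcp' := hsupp p' hp'
    simp only [Prod.mk.injEq, Fin.mk.injEq] at hpp'
    exact Prod.ext (Fin.ext (by omega)) hpp'.2
  · intro q _ hq
    have h : q.1.val + c < H := by by_contra h; simp [h] at hq
    exact ⟨(⟨q.1 + c, h⟩, q.2), Finset.mem_univ _, by simpa [h, blockShift] using hq, by simp⟩
  · intro p _ hp
    have hcp := hsupp p hp
    simp [blockShift, hcp, show p.1.val - c + c = p.1 by omega]

lemma evnorm_blockShift_le (c : ℕ) (u : Fin H × Fin m → ℝ) :
    evnorm (blockShift c u) ≤ evnorm u := by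
  refine Real.sqrt_le_sqrt ?_
  rw [sum_blockShift c u (fun _ x => x ^ 2) fun _ => zero_pow two_ne_zero]
  gcongr with q
  split_ifs
  exacts [le_rfl, sq_nonneg _]

lemma Gu_mulVec_apply (A : Matrix (Fin n) (Fin n) ℝ) (B : Matrix (Fin n) (Fin m) ℝ)
    (u : Fin H × Fin m → ℝ) (i : Fin H) (k : Fin n) :
    (Gu H A B *ᵥ u) (i, k) = (PH H A B *ᵥ blockShift (H - 1 - i) u) k := by
  rw [mulVec, mulVec, dotProduct, dotProduct,
    sum_blockShift _ u (fun p x => PH H A B k p * x) fun _ => mul_zero _]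
  refine Finset.sum_congr rfl fun q _ => ?_
  by_cases hq : q.1 ≤ i
  · rw [dif_pos (by omega)]
    simp only [Gu, PH, of_apply, if_pos (Fin.le_def.mp hq)]
    rw [show H - 1 - (q.1 + (H - 1 - i)) = i - q.1 by omega]
  · rw [dif_neg (by omega)]
    simp [Gu, hq]

lemma PH_mul_transpose_eq_Wu (A : Matrix (Fin n) (Fin n) ℝ) (B : Matrix (Fin n) (Fin m) ℝ) :
    PH H A B * (PH H A B)ᵀ = Wu H A B := by
  have hWu : Wu H A B = ∑ r ∈ Finset.range H, (A ^ r * B) * (A ^ r * B)ᵀ := by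
    unfold Wu
    refine Finset.sum_congr rfl fun r _ => ?_
    rw [transpose_mul, transpose_pow, Matrix.mul_assoc]
  ext i k
  rw [hWu, ← Finset.sum_range_reflect, Matrix.sum_apply, mul_apply, Fintype.sum_prod_type,
    Finset.sum_range fun r => ((A ^ (H - 1 - r) * B) * (A ^ (H - 1 - r) * B)ᵀ) i k]
  refine Finset.sum_congr rfl fun q _ => ?_
  rw [mul_apply]
  simp [PH, transpose_apply]

lemma evnorm_Gu_mulVec_le (A : Matrix (Fin n) (Fin n) ℝ) (B : Matrix (Fin n) (Fin m) ℝ)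
    (u : Fin H × Fin m → ℝ) :
    evnorm (Gu H A B *ᵥ u) ≤ √H * ‖PH H A B‖ * evnorm u := by
  have hblock (i : Fin H) : evnorm (fun k => (Gu H A B *ᵥ u) (i, k)) ≤ ‖PH H A B‖ * evnorm u :=
    calc evnorm (fun k => (Gu H A B *ᵥ u) (i, k))
        = evnorm (PH H A B *ᵥ blockShift (H - 1 - i) u) := by simp only [Gu_mulVec_apply]
      _ ≤ ‖PH H A B‖ * evnorm (blockShift (H - 1 - i) u) := evnorm_mulVec_le _ _
      _ ≤ ‖PH H A B‖ * evnorm u := by gcongr; exact evnorm_blockShift_le _ u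
  have hu := evnorm_nonneg u
  rw [← sq_le_sq₀ (evnorm_nonneg _) (by positivity), evnorm_sq_eq_sum_blocks, mul_pow,
    mul_pow, Real.sq_sqrt (Nat.cast_nonneg H), mul_assoc, ← mul_pow]
  calc ∑ i, evnorm (fun k => (Gu H A B *ᵥ u) (i, k)) ^ 2
      ≤ ∑ _i : Fin H, (‖PH H A B‖ * evnorm u) ^ 2 := by
        gcongr with i
        · exact evnorm_nonneg _
        · exact hblock i
    _ = H * (‖PH H A B‖ * evnorm u) ^ 2 := by simp

end Control

lemma evnorm_mulVec_single_le_sup' {n : ℕ} (A : Matrix (Fin n) (Fin n) ℝ) (H : ℕ) (j : Fin n) :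
    evnorm (A ^ H *ᵥ Pi.single j 1) ≤
      (Finset.range (H + 1)).sup' Finset.nonempty_range_add_one fun k => ‖A ^ k‖ :=
  calc evnorm (A ^ H *ᵥ Pi.single j 1) ≤ ‖A ^ H‖ * evnorm (Pi.single j 1) := evnorm_mulVec_le _ _
    _ = ‖A ^ H‖ := by simp [evnorm_eq_norm_toLp]
    _ ≤ _ := Finset.le_sup' (fun k => ‖A ^ k‖) (Finset.self_mem_range_succ H)

theorem g_norm_bound_general
    {n m : ℕ} (H : ℕ)
    (A : Matrix (Fin n) (Fin n) ℝ) (B : Matrix (Fin n) (Fin m) ℝ)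
    (C : Matrix (Fin n) (Fin n) ℝ) (D : Matrix (Fin m) (Fin m) ℝ)
    (hrank : (PH H A B).rank = n)
    (Pp : Matrix (Fin H × Fin m) (Fin n) ℝ) (hPp : IsMoorePenrose (PH H A B) Pp)
    (j : Fin n)
    (hW : (Wu H A B).IsHermitian) :
    evnorm ((Matrix.fromRows (((1 : Matrix (Fin H) (Fin H) ℝ) ⊗ₖ C) * Gu H A B)
        ((1 : Matrix (Fin H) (Fin H) ℝ) ⊗ₖ D)).mulVec
          (Pp.mulVec ((A ^ H).mulVec (Pi.single j 1)))) ≤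
      (‖C‖ * Real.sqrt H * Real.sqrt (⨆ i : Fin n, hW.eigenvalues i) + ‖D‖) *
        (Real.sqrt (⨅ i : Fin n, hW.eigenvalues i))⁻¹ *
        ((Finset.range (H + 1)).sup' Finset.nonempty_range_add_one fun k => ‖A ^ k‖) := by
  have : Nonempty (Fin n) := ⟨j⟩
  have hPW := PH_mul_transpose_eq_Wu (H := H) A B
  have hPPp := hPp.mul_eq_one_of_rank_eq (by rwa [Fintype.card_fin])
  have hP := l2_opNorm_le_sqrt_iSup_eigenvalues hW hPW
  set u := Pp *ᵥ (A ^ H *ᵥ Pi.single j 1)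
  have hu := (hPp.evnorm_mulVec_le hPPp hW hPW _).trans <|
    mul_le_mul_of_nonneg_left (evnorm_mulVec_single_le_sup' A H j)
      (inv_nonneg.2 (Real.sqrt_nonneg _))
  have hu0 := evnorm_nonneg u
  have hsplit := evnorm_fromRows_mulVec_le
    (((1 : Matrix (Fin H) (Fin H) ℝ) ⊗ₖ C) * Gu H A B) ((1 : Matrix (Fin H) (Fin H) ℝ) ⊗ₖ D) u
  rw [← mulVec_mulVec] at hsplit
  refine hsplit.trans ?_
  calc _ ≤ ‖C‖ * (√H * ‖PH H A B‖ * evnorm u) + ‖D‖ * evnorm u := by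
        gcongr
        · exact (evnorm_kronecker_one_mulVec_le C _).trans
            (by gcongr; exact evnorm_Gu_mulVec_le A B u)
        · exact evnorm_kronecker_one_mulVec_le D u
    _ = (‖C‖ * √H * ‖PH H A B‖ + ‖D‖) * evnorm u := by ring
    _ ≤ _ := by rw [mul_assoc _ (_)⁻¹]; gcongr

/-- Let `P_H(A,B)` have full row rank, `C, D` symmetric positive definite,
`u_c = P_H⁺ A^H e_j` and `g = [𝐂 G_u(A,B); 𝐃] u_c` with `𝐂 = I_H ⊗ C`, `𝐃 = I_H ⊗ D`.  Then
`‖g‖₂ ≤ (‖C‖₂ √H λ_max(W^u_H)^{1/2} + ‖D‖₂) λ_min(W^u_H)^{−1/2} α_H`,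
where `α_H = max_{0 ≤ k ≤ H} ‖A^k‖₂`. -/
theorem g_norm_bound
    {n m : ℕ} (H : ℕ) (hH : 1 ≤ H)
    (A : Matrix (Fin n) (Fin n) ℝ) (B : Matrix (Fin n) (Fin m) ℝ)
    (C : Matrix (Fin n) (Fin n) ℝ) (D : Matrix (Fin m) (Fin m) ℝ)
    (hC : C.PosDef) (hD : D.PosDef)
    (hrank : (PH H A B).rank = n)
    (Pp : Matrix (Fin H × Fin m) (Fin n) ℝ) (hPp : IsMoorePenrose (PH H A B) Pp)
    (j : Fin n)
    (hW : (Wu H A B).IsHermitian) :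
    evnorm ((Matrix.fromRows (((1 : Matrix (Fin H) (Fin H) ℝ) ⊗ₖ C) * Gu H A B)
        ((1 : Matrix (Fin H) (Fin H) ℝ) ⊗ₖ D)).mulVec
          (Pp.mulVec ((A ^ H).mulVec (Pi.single j 1)))) ≤
      (‖C‖ * Real.sqrt H * Real.sqrt (⨆ i : Fin n, hW.eigenvalues i) + ‖D‖) *
        (Real.sqrt (⨅ i : Fin n, hW.eigenvalues i))⁻¹ *
        ((Finset.range (H + 1)).sup' Finset.nonempty_range_add_one fun k => ‖A ^ k‖) :=
  g_norm_bound_general H A B C D hrank Pp hPp j hW
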